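/- arXiv:1603.05512 — 4 statements merged into one kernel-verified Lean document; each statement's English description precedes it below -/
import Mathlib

section
/- Let n ∈ ℕ, 0 < q < 1, and let v₁, …, vₙ ∈ ℂ satisfy q·e^{4π|Im(v_j)|} < 1 for each j. Then the n×n complex matrix whose (j,k) entry is D(v_j − conj(v_k)), where D(v) = ∑_{ℓ∈ℤ} (q^ℓ/(1+q^{2ℓ})) e^{2πiℓv}, is positive semidefinite. (D(v) equals (K/π)·dn(2Kv), where dn is the Jacobi elliptic function and K = (π/2)θ₃(0,q)².) -/
/-!
Every coefficient `q^ℓ/(1+q^{2ℓ})` of `D` is positive, and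
`e^{2πiℓ(v_j - conj v_k)} = e^{2πiℓv_j} · conj (e^{2πiℓv_k})`, so the quadratic form of the
matrix is the series `∑_ℓ q^ℓ/(1+q^{2ℓ}) |∑_j c_j e^{2πiℓv_j}|²` of nonnegative terms. Exchanging
the finite sums with the series is justified by absolute convergence: the coefficients are at most
`q^|ℓ|`, and `|Im (v_j - conj v_k)| ≤ 2 max (|Im v_j|, |Im v_k|)`.
-/

open Complex ComplexOrder

/-- The Fourier series `D(v) = ∑_{ℓ ∈ ℤ} (q^ℓ / (1 + q^{2ℓ})) e^{2πiℓv}`, which equals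
`(K/π)·dn(2Kv)` where `dn` is the Jacobi elliptic function and `K = (π/2)θ₃(0,q)²`. -/
noncomputable def dnFourier (q : ℝ) (v : ℂ) : ℂ :=
  ∑' l : ℤ, ((q : ℂ) ^ l / (1 + (q : ℂ) ^ (2 * l))) * Complex.exp (2 * Real.pi * Complex.I * l * v)

open ComplexConjugate Finset

theorem quadForm_tsum_rankOne_nonneg {ι α : Type*} [Fintype ι] (a : α → ℂ) (ha : ∀ l, 0 ≤ a l)
    (φ : α → ι → ℂ) (hφ : ∀ j k, Summable fun l => a l * (φ l j * conj (φ l k))) (c : ι → ℂ) :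
    0 ≤ ∑ j, ∑ k, (∑' l, a l * (φ l j * conj (φ l k))) * c j * conj (c k) := by
  have hfreq : ∀ l, ∑ j, ∑ k, a l * (φ l j * conj (φ l k)) * c j * conj (c k)
      = a l * normSq (∑ j, φ l j * c j) := by
    intro l
    rw [← mul_conj, map_sum, sum_mul_sum, mul_sum]
    refine sum_congr rfl fun j _ => ?_
    rw [mul_sum]
    refine sum_congr rfl fun k _ => ?_
    rw [map_mul]
    ring
  have hsum : ∀ j k, Summable fun l => a l * (φ l j * conj (φ l k)) * c j * conj (c k) :=
    fun j k => ((hφ j k).mul_right _).mul_right _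
  calc 0 ≤ ∑' l, a l * normSq (∑ j, φ l j * c j) :=
        tsum_nonneg fun l => mul_nonneg (ha l) (zero_le_real.mpr (normSq_nonneg _))
    _ = ∑' l, ∑ j, ∑ k, a l * (φ l j * conj (φ l k)) * c j * conj (c k) :=
        tsum_congr fun l => (hfreq l).symm
    _ = ∑ j, ∑ k, (∑' l, a l * (φ l j * conj (φ l k))) * c j * conj (c k) := by
        rw [Summable.tsum_finsetSum fun j _ => summable_sum fun k _ => hsum j k]
        refine sum_congr rfl fun j _ => ?_
        rw [Summable.tsum_finsetSum fun k _ => hsum j k]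
        simp only [tsum_mul_right]

theorem zpow_div_one_add_zpow_two_mul_le {q : ℝ} (hq : 0 < q) (l : ℤ) :
    q ^ l / (1 + q ^ (2 * l)) ≤ q ^ l.natAbs := by
  obtain ⟨m, rfl | rfl⟩ := Int.eq_nat_or_neg l
  · rw [Int.natAbs_natCast, zpow_natCast]
    exact div_le_self (by positivity) (le_add_of_nonneg_right (by positivity))
  · have h : q ^ (-(m : ℤ)) / (1 + q ^ (2 * -(m : ℤ))) = q ^ m / (q ^ (2 * m) + 1) := by
      rw [mul_neg, zpow_neg, zpow_neg]
      norm_cast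
      field_simp
      ring
    rw [Int.natAbs_neg, Int.natAbs_natCast, h]
    exact div_le_self (by positivity) (le_add_of_nonneg_left (by positivity))

theorem ofReal_zpow_div_one_add_zpow_two_mul (q : ℝ) (l : ℤ) :
    ((q ^ l / (1 + q ^ (2 * l)) : ℝ) : ℂ) = (q : ℂ) ^ l / (1 + (q : ℂ) ^ (2 * l)) := by
  push_cast; rfl

theorem norm_exp_two_pi_I_mul_le (l : ℤ) (w : ℂ) :
    ‖exp (2 * Real.pi * I * l * w)‖ ≤ Real.exp (2 * Real.pi * |w.im|) ^ l.natAbs := by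
  rw [norm_exp, ← Real.exp_nat_mul, Real.exp_le_exp]
  have hre : (2 * Real.pi * I * l * w).re = -(2 * Real.pi * l * w.im) := by
    simp [mul_re, mul_im]
  rw [hre]
  calc -(2 * Real.pi * l * w.im) ≤ |2 * Real.pi * l * w.im| := neg_le_abs _
    _ = l.natAbs * (2 * Real.pi * |w.im|) := by
        rw [abs_mul, abs_mul, abs_mul, abs_two, abs_of_pos Real.pi_pos, Nat.cast_natAbs,
          Int.cast_abs]
        ring

theorem summable_pow_natAbs {r : ℝ} (hr0 : 0 ≤ r) (hr1 : r < 1) :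
    Summable fun l : ℤ => r ^ l.natAbs := by
  apply Summable.of_nat_of_neg <;> simpa using summable_geometric_of_lt_one hr0 hr1

theorem summable_dnFourier_term {q : ℝ} (hq : 0 < q) {w : ℂ}
    (hw : q * Real.exp (2 * Real.pi * |w.im|) < 1) :
    Summable fun l : ℤ =>
      (q : ℂ) ^ l / (1 + (q : ℂ) ^ (2 * l)) * exp (2 * Real.pi * I * l * w) := by
  refine (summable_pow_natAbs (by positivity) hw).of_norm_bounded fun l => ?_
  rw [norm_mul, mul_pow, ← ofReal_zpow_div_one_add_zpow_two_mul, norm_real,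
    Real.norm_of_nonneg (by positivity)]
  exact mul_le_mul (zpow_div_one_add_zpow_two_mul_le hq l) (norm_exp_two_pi_I_mul_le l w)
    (norm_nonneg _) (by positivity)

theorem exp_two_pi_I_mul_sub_conj (l : ℤ) (v w : ℂ) :
    exp (2 * Real.pi * I * l * (v - conj w)) =
      exp (2 * Real.pi * I * l * v) * conj (exp (2 * Real.pi * I * l * w)) := by
  rw [← exp_conj, ← exp_add]
  congr 1
  simp only [map_mul, conj_I, map_ofNat, conj_ofReal, map_intCast]
  ring

theorem mul_exp_two_pi_abs_im_sub_conj_lt_one {q : ℝ} (hq : 0 ≤ q) {v w : ℂ}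
    (hv : q * Real.exp (4 * Real.pi * |v.im|) < 1)
    (hw : q * Real.exp (4 * Real.pi * |w.im|) < 1) :
    q * Real.exp (2 * Real.pi * |(v - conj w).im|) < 1 := by
  have him : |(v - conj w).im| ≤ |v.im| + |w.im| := by
    simpa [sub_im, conj_im] using abs_add_le v.im w.im
  have hbound : ∀ x, |v.im| ≤ x → |w.im| ≤ x → q * Real.exp (4 * Real.pi * x) < 1 →
      q * Real.exp (2 * Real.pi * |(v - conj w).im|) < 1 := fun x hvx hwx hx =>
    calc q * Real.exp (2 * Real.pi * |(v - conj w).im|)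
        ≤ q * Real.exp (4 * Real.pi * x) :=
          mul_le_mul_of_nonneg_left (Real.exp_le_exp.mpr (by nlinarith [Real.pi_pos])) hq
      _ < 1 := hx
  rcases le_total |v.im| |w.im| with h | h
  · exact hbound _ h le_rfl hw
  · exact hbound _ le_rfl h hv

theorem dn_matrix_posSemidef_general (n : ℕ) (q : ℝ) (hq0 : 0 < q)
    (v : Fin n → ℂ) (hv : ∀ j, q * Real.exp (4 * Real.pi * |(v j).im|) < 1) :
    ∀ c : Fin n → ℂ,
      0 ≤ ∑ j : Fin n, ∑ k : Fin n,
        dnFourier q (v j - (starRingEnd ℂ) (v k)) * c j * (starRingEnd ℂ) (c k) := by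
  intro c
  simp only [dnFourier, exp_two_pi_I_mul_sub_conj]
  refine quadForm_tsum_rankOne_nonneg _ (fun l => ?_) _ (fun j k => ?_) c
  · rw [← ofReal_zpow_div_one_add_zpow_two_mul, zero_le_real]
    positivity
  · simp only [← exp_two_pi_I_mul_sub_conj]
    exact summable_dnFourier_term hq0 (mul_exp_two_pi_abs_im_sub_conj_lt_one hq0.le (hv j) (hv k))

/-- For `n ∈ ℕ`, `0 < q < 1` and `v₁, …, vₙ ∈ ℂ` with `q·e^{4π|Im v_j|} < 1`, the matrix
`(D(v_j - conj v_k))_{j,k}` is positive semidefinite. -/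
theorem dn_matrix_posSemidef (n : ℕ) (q : ℝ) (hq0 : 0 < q) (hq1 : q < 1)
    (v : Fin n → ℂ) (hv : ∀ j, q * Real.exp (4 * Real.pi * |(v j).im|) < 1) :
    ∀ c : Fin n → ℂ,
      0 ≤ ∑ j : Fin n, ∑ k : Fin n,
        dnFourier q (v j - (starRingEnd ℂ) (v k)) * c j * (starRingEnd ℂ) (c k) :=
  dn_matrix_posSemidef_general n q hq0 v hv
end

section
/- Let m, n ∈ ℕ and let s_{j,ℓ} ∈ ℂ with Re(s_{j,ℓ}) > 0 for all 1 ≤ j ≤ n, 1 ≤ ℓ ≤ m, and assume s_{j,ℓ} + conj(s_{k,ℓ}) ≠ 1 for all j, k, ℓ. Then the n×n complex matrix whose (j,k) entry is ∏_{ℓ=1}^{m} ( 1/(s_{j,ℓ} + conj(s_{k,ℓ}) − 1) − ζ(s_{j,ℓ} + conj(s_{k,ℓ}))/(s_{j,ℓ} + conj(s_{k,ℓ})) ) is positive semidefinite, where ζ is the Riemann zeta function. -/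
/-!
Write `Φ(w) = ∫₁^∞ {x} x^{-w-1} dx`. For `Re w > 1`, Abel summation gives
`ζ(w) = w ∫₁^∞ ⌊x⌋ x^{-w-1} dx`, hence `Φ(w) = 1/(w-1) - ζ(w)/w`; both sides are holomorphic on
`Re w > 0` away from `1` (the right side is `(1 - ζ₀(w))/w` with `ζ₀` entire), so the identity
persists there. At `w = s + conj t` the integrand factors as `conj (f_s x) * f_t x` with
`f_s x = √{x} · x^{-conj s - 1/2}`, square-integrable on `(1, ∞)` when `Re s > 0`, so for each `ℓ`
the matrix `(Φ(s_{j,ℓ} + conj s_{k,ℓ}))_{j,k}` is a Gram matrix in `L²(1, ∞)`. The product over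
`ℓ` is their Hadamard product, positive semidefinite by Schur's theorem.
-/

open Complex ComplexOrder MeasureTheory Set Filter Topology Asymptotics
open scoped ComplexConjugate

namespace Matrix

variable {n ι 𝕜 : Type*} [RCLike 𝕜]

theorem posSemidef_of_prod_apply [Finite n] {A : ι → Matrix n n 𝕜} (s : Finset ι)
    (hA : ∀ l ∈ s, (A l).PosSemidef) : (of fun i j => ∏ l ∈ s, A l i j).PosSemidef := by
  classical
  induction s using Finset.induction_on with
  | empty =>
    convert posSemidef_gram 𝕜 fun _ : n => (1 : 𝕜) using 1
    ext
    simp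
  | insert a s ha ih =>
    have h := (hA a (s.mem_insert_self a)).hadamard (ih fun l hl => hA l (s.mem_insert_of_mem hl))
    convert h using 1
    ext i j
    simp [Finset.prod_insert ha]

theorem PosSemidef.sum_mul_mul_conj_nonneg [Fintype n] {A : Matrix n n 𝕜} (hA : A.PosSemidef)
    (c : n → 𝕜) : 0 ≤ ∑ i, ∑ j, A i j * c i * conj (c j) := by
  convert hA.dotProduct_mulVec_nonneg (star c) using 1
  simp [dotProduct, mulVec, Finset.mul_sum, mul_assoc, mul_left_comm]

end Matrix

theorem MeasureTheory.posSemidef_integral_conj_mul {α ι 𝕜 : Type*} [RCLike 𝕜] [Finite ι]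
    [MeasurableSpace α] {μ : Measure α} {f : ι → α → 𝕜} (hf : ∀ i, MemLp (f i) 2 μ) :
    (Matrix.of fun i j => ∫ a, conj (f i a) * f j a ∂μ).PosSemidef := by
  convert Matrix.posSemidef_gram 𝕜 (fun i => (hf i).toLp (f i)) using 1
  ext i j
  simp only [Matrix.of_apply, Matrix.gram_apply, L2.inner_def, RCLike.inner_apply]
  refine integral_congr_ae ?_
  filter_upwards [(hf i).coeFn_toLp, (hf j).coeFn_toLp] with a hi hj
  rw [hi, hj, mul_comm]

noncomputable def fractIntegral (w : ℂ) : ℂ :=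
  ∫ x in Ioi (1 : ℝ), Int.fract x * (x : ℂ) ^ (-w - 1)

theorem integrableOn_fract_mul_cpow {w : ℂ} (hw : 0 < w.re) :
    IntegrableOn (fun x : ℝ => Int.fract x * (x : ℂ) ^ (-w - 1)) (Ioi 1) := by
  refine Integrable.mono' (integrableOn_Ioi_rpow_of_lt (by linarith : -w.re - 1 < -1) one_pos)
    (by fun_prop : Measurable fun x : ℝ => Int.fract x * (x : ℂ) ^ (-w - 1)).aestronglyMeasurable ?_
  filter_upwards [self_mem_ae_restrict measurableSet_Ioi] with x hx
  have hx0 : 0 < x := zero_lt_one.trans hx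
  rw [norm_mul, norm_real, Real.norm_of_nonneg (Int.fract_nonneg x),
    norm_cpow_eq_rpow_re_of_pos hx0]
  simpa using mul_le_of_le_one_left (Real.rpow_nonneg hx0.le _) (Int.fract_lt_one x).le

theorem fractIntegral_eq_mellin (w : ℂ) :
    fractIntegral w =
      mellin ((Ioi (1 : ℝ)).indicator fun x : ℝ => ((Int.fract x : ℝ) : ℂ)) (-w) := by
  have hIoi : Ioi (0 : ℝ) ∩ Ioi 1 = Ioi 1 := by rw [Ioi_inter_Ioi, max_eq_right zero_le_one]
  rw [mellin, fractIntegral]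
  conv_lhs => rw [← hIoi, ← setIntegral_indicator measurableSet_Ioi]
  refine setIntegral_congr_fun measurableSet_Ioi fun t _ => ?_
  by_cases ht : t ∈ Ioi 1 <;> simp [ht, mul_comm, sub_eq_add_neg]

theorem differentiableAt_fractIntegral {w : ℂ} (hw : 0 < w.re) :
    DifferentiableAt ℂ fractIntegral w := by
  set g : ℝ → ℂ := (Ioi (1 : ℝ)).indicator fun x => ((Int.fract x : ℝ) : ℂ)
  have hg_le : ∀ x, ‖g x‖ ≤ 1 := fun x => (norm_indicator_le_norm_self _ x).trans <| by
    rw [norm_real, Real.norm_of_nonneg (Int.fract_nonneg x)]; exact (Int.fract_lt_one x).le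
  have hg_meas : Measurable g :=
    (by fun_prop : Measurable fun x : ℝ => ((Int.fract x : ℝ) : ℂ)).indicator measurableSet_Ioi
  have hg_loc : LocallyIntegrableOn g (Ioi 0) :=
    ((locallyIntegrable_const (1 : ℝ)).mono hg_meas.aestronglyMeasurable
      (ae_of_all _ fun x => by simpa using hg_le x)).locallyIntegrableOn _
  have hg_top : g =O[atTop] (· ^ (-0 : ℝ)) :=
    IsBigO.of_bound 1 (Eventually.of_forall fun x => by simpa using hg_le x)
  have hg_bot : g =O[𝓝[>] 0] (· ^ (-(-w.re - 1))) := by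
    refine EventuallyEq.trans_isBigO ?_ (isBigO_zero _ _)
    filter_upwards [Ioo_mem_nhdsGT one_pos] with x hx
    exact indicator_of_notMem (fun h => (lt_asymm hx.2 h).elim) _
  have := mellin_differentiableAt_of_isBigO_rpow (s := -w) hg_loc hg_top (by simpa using hw)
    hg_bot (by simp)
  rw [show fractIntegral = fun w => mellin g (-w) from funext fractIntegral_eq_mellin]
  exact this.comp w differentiableAt_id.neg

theorem riemannZeta_eq_mul_integral_floor {w : ℂ} (hw : 1 < w.re) :
    riemannZeta w = w * ∫ x in Ioi (1 : ℝ), (⌊x⌋₊ : ℂ) * (x : ℂ) ^ (-(w + 1)) := by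
  have hO : (fun n : ℕ => ∑ _k ∈ Finset.Icc 1 n, (1 : ℝ)) =O[atTop] fun n => (n : ℝ) ^ (1 : ℝ) := by
    simpa using isBigO_refl (fun n : ℕ => (n : ℝ)) atTop
  have h := LSeries_eq_mul_integral_of_nonneg (fun _ => 1) zero_le_one hw hO fun _ => zero_le_one
  simpa [← Pi.one_def, LSeries_one_eq_riemannZeta hw] using h

theorem fractIntegral_eq_of_one_lt_re {w : ℂ} (hw : 1 < w.re) :
    fractIntegral w = 1 / (w - 1) - riemannZeta w / w := by
  have hw0 : w ≠ 0 := ne_zero_of_re_pos (zero_lt_one.trans hw)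
  have hpow_re : (-w).re < -1 := by simpa using hw
  have hfloor : ∀ x ∈ Ioi (1 : ℝ),
      (⌊x⌋₊ : ℂ) * (x : ℂ) ^ (-(w + 1)) = (x : ℂ) ^ (-w) - Int.fract x * (x : ℂ) ^ (-w - 1) := by
    intro x hx
    have hx0 : (x : ℂ) ≠ 0 := ofReal_ne_zero.2 (zero_lt_one.trans hx).ne'
    rw [show -w = (-w - 1) + 1 by ring, cpow_add _ _ hx0, cpow_one, Int.fract,
      ← natCast_floor_eq_intCast_floor (zero_lt_one.trans hx).le]
    push_cast
    ring_nf
  have hfloor_int : ∫ x in Ioi (1 : ℝ), (⌊x⌋₊ : ℂ) * (x : ℂ) ^ (-(w + 1))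
      = 1 / (w - 1) - fractIntegral w := by
    rw [setIntegral_congr_fun measurableSet_Ioi hfloor, integral_sub
      (integrableOn_Ioi_cpow_of_lt hpow_re one_pos)
      (integrableOn_fract_mul_cpow (zero_lt_one.trans hw)), integral_Ioi_cpow_of_lt hpow_re one_pos]
    congr 1
    rw [ofReal_one, one_cpow, neg_add_eq_sub, ← neg_sub, div_neg, neg_div, neg_neg]
  rw [riemannZeta_eq_mul_integral_floor hw, hfloor_int]
  field_simp
  ring

theorem fractIntegral_eq_of_re_pos {w : ℂ} (hw : 0 < w.re) (hw1 : w ≠ 1) :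
    fractIntegral w = 1 / (w - 1) - riemannZeta w / w := by
  set U : Set ℂ := {z | 0 < z.re}
  have hU : IsOpen U := isOpen_lt continuous_const continuous_re
  have hΦ : DifferentiableOn ℂ fractIntegral U := fun z hz =>
    (differentiableAt_fractIntegral hz).differentiableWithinAt
  have hg : DifferentiableOn ℂ (fun z => (1 - riemannZeta₀ z) / z) U := fun z hz =>
    (((differentiable_riemannZeta₀ z).const_sub 1).div differentiableAt_id
      (ne_zero_of_re_pos hz)).differentiableWithinAt
  have hΦg : EqOn fractIntegral (fun z => (1 - riemannZeta₀ z) / z) U := by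
    refine (hΦ.analyticOnNhd hU).eqOn_of_preconnected_of_eventuallyEq (hg.analyticOnNhd hU)
      (convex_halfSpace_re_gt 0).isPreconnected (show (0 : ℝ) < (2 : ℂ).re by simp) ?_
    filter_upwards [(isOpen_lt continuous_const continuous_re).mem_nhds
      (by simp : (1 : ℝ) < (2 : ℂ).re)] with z hz
    have hz0 : z ≠ 0 := ne_zero_of_re_pos (zero_lt_one.trans hz)
    have hz1 : z ≠ 1 := by rintro rfl; simp at hz
    rw [fractIntegral_eq_of_one_lt_re hz, riemannZeta_eq_inv_sub_add hz1]
    field_simp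
    ring
  have hw0 : w ≠ 0 := ne_zero_of_re_pos hw
  rw [hΦg hw, riemannZeta_eq_inv_sub_add hw1]
  field_simp
  ring

theorem Complex.conj_ofReal_cpow {x : ℝ} (hx : 0 ≤ x) (w : ℂ) :
    conj ((x : ℂ) ^ w) = (x : ℂ) ^ conj w := by
  rw [cpow_conj _ _ (by simp [arg_ofReal_of_nonneg hx, Real.pi_ne_zero.symm]), conj_ofReal]

noncomputable def sqrtFractMulCpow (s : ℂ) (x : ℝ) : ℂ :=
  Real.sqrt (Int.fract x) * (x : ℂ) ^ (-conj s - 1 / 2)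

theorem conj_sqrtFractMulCpow_mul {x : ℝ} (hx : 0 < x) (s t : ℂ) :
    conj (sqrtFractMulCpow s x) * sqrtFractMulCpow t x
      = Int.fract x * (x : ℂ) ^ (-(s + conj t) - 1) := by
  have hx0 : (x : ℂ) ≠ 0 := ofReal_ne_zero.2 hx.ne'
  have hsqrt : (Real.sqrt (Int.fract x) : ℂ) * Real.sqrt (Int.fract x) = Int.fract x := by
    exact_mod_cast Real.mul_self_sqrt (Int.fract_nonneg x)
  simp only [sqrtFractMulCpow, map_mul, conj_ofReal, conj_ofReal_cpow hx.le, map_sub, map_neg,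
    conj_conj, map_div₀, map_one, map_ofNat]
  calc _ = (Real.sqrt (Int.fract x) * Real.sqrt (Int.fract x) : ℂ)
        * ((x : ℂ) ^ (-s - 1 / 2) * (x : ℂ) ^ (-conj t - 1 / 2)) := by ring
    _ = _ := by rw [hsqrt, ← cpow_add _ _ hx0]; ring_nf

theorem fractIntegral_add_conj (s t : ℂ) :
    fractIntegral (s + conj t)
      = ∫ x in Ioi (1 : ℝ), conj (sqrtFractMulCpow s x) * sqrtFractMulCpow t x :=
  setIntegral_congr_fun measurableSet_Ioi fun _ hx =>
    (conj_sqrtFractMulCpow_mul (zero_lt_one.trans hx) s t).symm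

theorem memLp_sqrtFractMulCpow {s : ℂ} (hs : 0 < s.re) :
    MemLp (sqrtFractMulCpow s) 2 (volume.restrict (Ioi 1)) := by
  have hmeas : Measurable (sqrtFractMulCpow s) := by unfold sqrtFractMulCpow; fun_prop
  refine (memLp_two_iff_integrable_sq_norm hmeas.aestronglyMeasurable).2 ?_
  have hint := integrableOn_fract_mul_cpow (w := s + conj s) (by simpa using hs)
  refine IntegrableOn.congr_fun hint.norm (fun x hx => ?_) measurableSet_Ioi
  rw [← conj_sqrtFractMulCpow_mul (zero_lt_one.trans hx), norm_mul, RCLike.norm_conj, sq]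

theorem posSemidef_fractIntegral {ι : Type*} [Finite ι] {s : ι → ℂ} (hs : ∀ i, 0 < (s i).re) :
    (Matrix.of fun i j => fractIntegral (s i + conj (s j))).PosSemidef := by
  simpa only [fractIntegral_add_conj] using
    MeasureTheory.posSemidef_integral_conj_mul fun i => memLp_sqrtFractMulCpow (hs i)

/-- For `s_{j,ℓ} ∈ ℂ` with `Re(s_{j,ℓ}) > 0` and `s_{j,ℓ} + conj s_{k,ℓ} ≠ 1`,
the matrix with `(j,k)` entry
`∏_{ℓ=1}^m (1/(s_{j,ℓ} + conj s_{k,ℓ} - 1) - ζ(s_{j,ℓ} + conj s_{k,ℓ})/(s_{j,ℓ} + conj s_{k,ℓ}))`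
is positive semidefinite. -/
theorem zeta_product_matrix_posSemidef (m n : ℕ) (s : Fin n → Fin m → ℂ)
    (hs : ∀ j l, 0 < (s j l).re)
    (hne : ∀ j k l, s j l + (starRingEnd ℂ) (s k l) ≠ 1) :
    ∀ c : Fin n → ℂ,
      0 ≤ ∑ j : Fin n, ∑ k : Fin n,
        (∏ l : Fin m,
            (1 / (s j l + (starRingEnd ℂ) (s k l) - 1)
              - riemannZeta (s j l + (starRingEnd ℂ) (s k l)) / (s j l + (starRingEnd ℂ) (s k l))))
          * c j * (starRingEnd ℂ) (c k) := by
  intro c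
  have hentry (j k l) : fractIntegral (s j l + conj (s k l)) = 1 / (s j l + conj (s k l) - 1)
      - riemannZeta (s j l + conj (s k l)) / (s j l + conj (s k l)) :=
    fractIntegral_eq_of_re_pos (by simpa using add_pos (hs j l) (hs k l)) (hne j k l)
  have hpsd := Matrix.posSemidef_of_prod_apply Finset.univ fun l (_ : l ∈ Finset.univ) =>
    posSemidef_fractIntegral (s := fun j => s j l) fun j => hs j l
  simpa only [Matrix.of_apply, hentry] using hpsd.sum_mul_mul_conj_nonneg c
end

section
/- Let m, n ∈ ℕ, let λ₁, …, λ_m > 0 be real, and let φ_{j,ℓ} be real numbers with 0 < φ_{j,ℓ} < π/2 for all 1 ≤ j ≤ n, 1 ≤ ℓ ≤ m. Then the real symmetric n×n matrix whose (j,k) entry is ∏_{ℓ=1}^{m} (sin(φ_{j,ℓ} + φ_{k,ℓ}))^{−λ_ℓ} is positive semidefinite. -/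
/-!
Since `sin (a + b) = cos a * cos b * (tan a + tan b)`, each factor `sin (φ_j + φ_k) ^ (-λ)` is
the kernel `(x_j + x_k) ^ (-λ)` at `x = tan φ > 0`, conjugated by a diagonal matrix. That kernel is
a Gram matrix in `L²(0, ∞)`, because
`Γ(λ) (x + y) ^ (-λ) = ∫₀^∞ t ^ (λ - 1) e ^ (-x t) e ^ (-y t) dt`,
and the entrywise product over `ℓ` stays positive semidefinite by the Schur product theorem.
-/

open MeasureTheory Set Real
open scoped ComplexOrder

theorem Real.sin_add_eq_cos_mul_cos_mul_tan_add {a b : ℝ} (ha : cos a ≠ 0) (hb : cos b ≠ 0) :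
    sin (a + b) = cos a * cos b * (tan a + tan b) := by
  rw [sin_add, tan_eq_sin_div_cos, tan_eq_sin_div_cos]
  field_simp

namespace Matrix

variable {ι : Type*} [Fintype ι]

theorem PosSemidef.prod_hadamard {κ 𝕜 : Type*} [RCLike 𝕜] (s : Finset κ)
    {A : κ → Matrix ι ι 𝕜} (hA : ∀ l ∈ s, (A l).PosSemidef) :
    (of fun i j => ∏ l ∈ s, A l i j).PosSemidef := by
  classical
  induction s using Finset.induction_on with
  | empty => simpa [vecMulVec] using posSemidef_vecMulVec_self_star fun _ : ι => (1 : 𝕜)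
  | insert l s hl ih =>
    convert (hA l (s.mem_insert_self l)).hadamard (ih fun k hk => hA k (s.mem_insert_of_mem hk))
      using 1
    ext i j
    simp [Finset.prod_insert hl]

theorem PosSemidef.diagonal_conj {R : Type*} [CommRing R] [PartialOrder R] [StarRing R]
    [TrivialStar R] {A : Matrix ι ι R} (hA : A.PosSemidef) (d : ι → R) :
    (of fun i j => d i * A i j * d j).PosSemidef := by
  classical
  convert hA.conjTranspose_mul_mul_same (diagonal d) using 1
  ext i j
  simp [diagonal_mul, mul_diagonal]

theorem posSemidef_of_integral_mul {α : Type*} [MeasurableSpace α] {μ : Measure α}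
    {f : ι → α → ℝ} (hf : ∀ i j, Integrable (fun t => f i t * f j t) μ) :
    (of fun i j => ∫ t, f i t * f j t ∂μ).PosSemidef := by
  refine PosSemidef.of_dotProduct_mulVec_nonneg ?_ fun c => ?_
  · ext i j
    simp [mul_comm]
  · have hint : ∀ i j, Integrable (fun t => c i * f i t * (c j * f j t)) μ := fun i j =>
      ((hf i j).const_mul (c i * c j)).congr (by filter_upwards with t; ring)
    have hsq : star c ⬝ᵥ (of (fun i j => ∫ t, f i t * f j t ∂μ) *ᵥ c)
        = ∫ t, (∑ i, c i * f i t) ^ 2 ∂μ := by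
      simp only [sq, Finset.sum_mul_sum]
      simp only [star_trivial, dotProduct, mulVec, of_apply, Finset.mul_sum]
      rw [integral_finsetSum _ fun i _ => integrable_finsetSum _ fun j _ => hint i j]
      refine Finset.sum_congr rfl fun i _ => ?_
      rw [integral_finsetSum _ fun j _ => hint i j]
      refine Finset.sum_congr rfl fun j _ => ?_
      rw [← integral_mul_const, ← integral_const_mul]
      congr 1 with t
      ring
    rw [hsq]
    exact integral_nonneg fun t => sq_nonneg _

theorem posSemidef_add_rpow_neg {x : ι → ℝ} (hx : ∀ i, 0 < x i) {s : ℝ} (hs : 0 < s) :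
    (of fun i j => (x i + x j) ^ (-s)).PosSemidef := by
  have hlaplace : ∀ r : ℝ, 0 < r →
      r ^ (-s) = (Gamma s)⁻¹ * ∫ t in Ioi 0, t ^ (s - 1) * exp (-(r * t)) := fun r hr => by
    rw [integral_rpow_mul_exp_neg_mul_Ioi hs hr, one_div, inv_rpow hr.le, ← rpow_neg hr.le,
      mul_left_comm, inv_mul_cancel₀ (Gamma_pos_of_pos hs).ne', mul_one]
  have hfactor : ∀ i j, ∀ t ∈ Ioi (0 : ℝ),
      t ^ (s - 1) * exp (-((x i + x j) * t))
        = t ^ ((s - 1) / 2) * exp (-(x i * t)) * (t ^ ((s - 1) / 2) * exp (-(x j * t))) :=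
    fun i j t (ht : 0 < t) => by
      rw [mul_mul_mul_comm, ← rpow_add ht, ← exp_add]
      congr 2 <;> ring
  have hint : ∀ i j, IntegrableOn (fun t => t ^ (s - 1) * exp (-((x i + x j) * t))) (Ioi 0) :=
    fun i j => .of_integral_ne_zero <| by
      rw [integral_rpow_mul_exp_neg_mul_Ioi hs (add_pos (hx i) (hx j))]
      exact (mul_pos (rpow_pos_of_pos (by simp [add_pos (hx i) (hx j)]) _)
        (Gamma_pos_of_pos hs)).ne'
  convert (posSemidef_of_integral_mul (μ := volume.restrict (Ioi 0)) fun i j =>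
      (hint i j).congr_fun (hfactor i j) measurableSet_Ioi).smul
    (inv_nonneg.mpr (Gamma_pos_of_pos hs).le) using 1
  ext i j
  rw [of_apply, hlaplace _ (add_pos (hx i) (hx j)), smul_apply, of_apply, smul_eq_mul,
    setIntegral_congr_fun measurableSet_Ioi (hfactor i j)]

theorem posSemidef_sin_add_rpow_neg {φ : ι → ℝ} (h0 : ∀ i, 0 < φ i) (h1 : ∀ i, φ i < π / 2)
    {s : ℝ} (hs : 0 < s) : (of fun i j => sin (φ i + φ j) ^ (-s)).PosSemidef := by
  have hcos : ∀ i, 0 < cos (φ i) := fun i =>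
    cos_pos_of_mem_Ioo ⟨by linarith [h0 i, pi_pos], h1 i⟩
  have htan : ∀ i, 0 < tan (φ i) := fun i => tan_pos_of_pos_of_lt_pi_div_two (h0 i) (h1 i)
  have hfactor : (of fun i j => sin (φ i + φ j) ^ (-s)) = of fun i j => cos (φ i) ^ (-s) *
      of (fun i j => (tan (φ i) + tan (φ j)) ^ (-s)) i j * cos (φ j) ^ (-s) := by
    ext i j
    simp only [of_apply]
    rw [sin_add_eq_cos_mul_cos_mul_tan_add (hcos i).ne' (hcos j).ne',
      mul_rpow (mul_pos (hcos i) (hcos j)).le (add_pos (htan i) (htan j)).le,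
      mul_rpow (hcos i).le (hcos j).le]
    ring
  rw [hfactor]
  exact (posSemidef_add_rpow_neg htan hs).diagonal_conj _

end Matrix

/-- For real `λ₁, …, λ_m > 0` and real `φ_{j,ℓ}` with `0 < φ_{j,ℓ} < π/2`, the real symmetric
matrix with `(j,k)` entry `∏_{ℓ=1}^m (sin(φ_{j,ℓ} + φ_{k,ℓ}))^{-λ_ℓ}` is positive
semidefinite. -/
theorem inv_sin_pow_product_matrix_posSemidef (m n : ℕ) (lam : Fin m → ℝ)
    (hlam : ∀ l, 0 < lam l) (φ : Fin n → Fin m → ℝ)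
    (hφ0 : ∀ j l, 0 < φ j l) (hφ1 : ∀ j l, φ j l < Real.pi / 2) :
    ∀ c : Fin n → ℝ,
      0 ≤ ∑ j : Fin n, ∑ k : Fin n,
        (∏ l : Fin m, Real.sin (φ j l + φ k l) ^ (-(lam l))) * c j * c k := by
  intro c
  have hS := Matrix.PosSemidef.prod_hadamard (𝕜 := ℝ) Finset.univ fun l _ =>
    Matrix.posSemidef_sin_add_rpow_neg (fun j => hφ0 j l) (fun j => hφ1 j l) (hlam l)
  refine (hS.dotProduct_mulVec_nonneg c).trans_eq ?_
  simp only [star_trivial, dotProduct, Matrix.mulVec, Matrix.of_apply, Finset.mul_sum]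
  refine Finset.sum_congr rfl fun j _ => Finset.sum_congr rfl fun k _ => ?_
  ring
end

section
/- Let m, n ∈ ℕ and let s_{j,ℓ} ∈ ℂ with Re(s_{j,ℓ}) > 0 for all 1 ≤ j ≤ n, 1 ≤ ℓ ≤ m, and assume s_{j,ℓ} + conj(s_{k,ℓ}) ≠ 1 for all j, k, ℓ. Then the n×n complex matrix whose (j,k) entry is ∏_{ℓ=1}^{m} (1 − 2^{1 − s_{j,ℓ} − conj(s_{k,ℓ})}) Γ(s_{j,ℓ} + conj(s_{k,ℓ}) + 1) ζ(s_{j,ℓ} + conj(s_{k,ℓ})) is positive semidefinite, where Γ is the Gamma function and ζ is the Riemann zeta function. -/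
/-! Expanding `e^{-t} / (1 + e^{-t})^2 = ∑ (-1)^(n+1) n e^{-nt}` and integrating termwise against
`t^z` gives `(1 - 2^(1-z)) Γ(z+1) ζ(z) = ∫₀^∞ t^z e^{-t} / (1 + e^{-t})^2 dt` for `Re z > 1`, and the
identity theorem extends this to `Re z > 0`, `z ≠ 1`. For `z = s_j + conj s_k` the integrand is
`t^{s_j} conj (t^{s_k})` times a nonnegative weight, so each factor is a Gram matrix in `L²(0, ∞)`;
the Schur product theorem then handles the product over `ℓ`. -/

open Complex ComplexOrder
open MeasureTheory Set Filter Asymptotics Topology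
open scoped Real ComplexConjugate

namespace Matrix

variable {𝕜 ι n : Type*} [RCLike 𝕜]

theorem posSemidef_integral_mul_conj [Finite ι] {α : Type*} [MeasurableSpace α] {μ : Measure α}
    {f : ι → α → 𝕜} (hf : ∀ i, MemLp (f i) 2 μ) :
    (of fun i j ↦ ∫ a, f i a * conj (f j a) ∂μ).PosSemidef := by
  have hgram : (of fun i j ↦ ∫ a, f i a * conj (f j a) ∂μ)
      = (gram 𝕜 fun i ↦ (hf i).toLp (f i))ᵀ := by
    ext i j
    refine integral_congr_ae ?_
    filter_upwards [(hf i).coeFn_toLp, (hf j).coeFn_toLp] with a hi hj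
    rw [hi, hj, RCLike.inner_apply, mul_comm]
  exact hgram ▸ (posSemidef_gram 𝕜 _).transpose

theorem posSemidef_entrywise_prod [Finite n] {A : ι → Matrix n n 𝕜} (s : Finset ι)
    (hA : ∀ i ∈ s, (A i).PosSemidef) : (of fun j k ↦ ∏ i ∈ s, A i j k).PosSemidef := by
  classical
  induction s using Finset.induction_on with
  | empty =>
    convert posSemidef_vecMulVec_self_star (1 : n → 𝕜) using 1
    ext
    simp [vecMulVec]
  | insert i s hi ih =>
    simp_rw [Finset.prod_insert hi]
    exact (hA i (s.mem_insert_self i)).hadamard (ih fun l hl ↦ hA l (s.mem_insert_of_mem hl))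

theorem PosSemidef.sum_mul_mul_star_nonneg [Fintype n] {A : Matrix n n 𝕜} (hA : A.PosSemidef)
    (c : n → 𝕜) : 0 ≤ ∑ j, ∑ k, A j k * c j * star (c k) := by
  simpa [dotProduct, mulVec, Finset.mul_sum, mul_assoc, mul_left_comm] using
    hA.dotProduct_mulVec_nonneg (star c)

end Matrix

lemma hasSum_neg_one_pow_div_nat_cpow {z : ℂ} (hz : 1 < z.re) :
    HasSum (fun n : ℕ ↦ (-1) ^ (n + 1) / (n : ℂ) ^ z) ((1 - 2 ^ (1 - z)) * riemannZeta z) := by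
  set f : ℕ → ℂ := fun n ↦ 1 / (n : ℂ) ^ z
  have hf : HasSum f (riemannZeta z) := by
    rw [zeta_eq_tsum_one_div_nat_cpow hz]
    exact (summable_one_div_nat_cpow.mpr hz).hasSum
  have heven : HasSum (fun k ↦ f (2 * k)) (2 ^ (-z) * riemannZeta z) := by
    refine (hf.mul_left _).congr_fun fun k ↦ ?_
    simp only [f, Nat.cast_mul, Nat.cast_ofNat, cpow_neg]
    rw [show ((2 : ℂ) * k) = ((2 : ℕ) : ℂ) * k by simp, natCast_mul_natCast_cpow, Nat.cast_ofNat,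
      one_div, one_div, mul_inv]
  have hodd : HasSum (fun k ↦ f (2 * k + 1)) (riemannZeta z - 2 ^ (-z) * riemannZeta z) := by
    have hinj : Function.Injective fun k : ℕ ↦ 2 * k + 1 := fun a b h ↦ by simp_all
    have hs : Summable fun k ↦ f (2 * k + 1) := hf.summable.comp_injective hinj
    convert hs.hasSum
    rw [sub_eq_iff_eq_add', ← heven.tsum_eq, ← hf.tsum_eq, tsum_even_add_odd heven.summable hs]
  have h2 : (2 : ℂ) ^ (1 - z) = 2 * 2 ^ (-z) := by
    rw [sub_eq_add_neg, cpow_add _ _ two_ne_zero, cpow_one]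
  convert HasSum.even_add_odd (f := fun n : ℕ ↦ (-1) ^ (n + 1) / (n : ℂ) ^ z)
    (heven.neg.congr_fun fun k ↦ ?_) (hodd.congr_fun fun k ↦ ?_) using 1
  · rw [h2]; ring
  · simp [f, pow_succ, pow_mul, neg_div]
  · simp [f, pow_succ, pow_mul]

-- equals `e^t / (e^t + 1)^2`
noncomputable def etaKernel (t : ℝ) : ℝ := rexp (-t) / (1 + rexp (-t)) ^ 2

lemma etaKernel_nonneg (t : ℝ) : 0 ≤ etaKernel t := by unfold etaKernel; positivity

lemma etaKernel_le_exp_neg (t : ℝ) : etaKernel t ≤ rexp (-t) :=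
  div_le_self (Real.exp_pos _).le (one_le_pow₀ (le_add_of_nonneg_right (Real.exp_pos _).le))

lemma continuous_etaKernel : Continuous etaKernel := by
  unfold etaKernel
  exact (Real.continuous_exp.comp continuous_neg).div (by fun_prop) fun t ↦ by positivity

lemma isBigO_etaKernel_atTop : (ofReal ∘ etaKernel) =O[atTop] fun t ↦ rexp (-1 * t) :=
  .of_bound 1 <| .of_forall fun t ↦ by
    simpa [abs_of_nonneg (etaKernel_nonneg t)] using etaKernel_le_exp_neg t

lemma isBigO_etaKernel_nhdsGT_zero :
    (ofReal ∘ etaKernel) =O[𝓝[>] 0] fun t : ℝ ↦ t ^ (-(0 : ℝ)) :=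
  .of_bound 1 <| eventually_mem_nhdsWithin.mono fun t (ht : 0 < t) ↦ by
    simpa [abs_of_nonneg (etaKernel_nonneg t)] using
      (etaKernel_le_exp_neg t).trans (Real.exp_le_one_iff.mpr (neg_nonpos.mpr ht.le))

lemma mellinConvergent_etaKernel {s : ℂ} (hs : 0 < s.re) :
    MellinConvergent (ofReal ∘ etaKernel) s :=
  mellinConvergent_of_isBigO_rpow_exp one_pos
    ((continuous_ofReal.comp continuous_etaKernel).locallyIntegrable.locallyIntegrableOn _)
    isBigO_etaKernel_atTop isBigO_etaKernel_nhdsGT_zero hs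

lemma differentiableAt_mellin_etaKernel {s : ℂ} (hs : 0 < s.re) :
    DifferentiableAt ℂ (mellin (ofReal ∘ etaKernel)) s :=
  mellin_differentiableAt_of_isBigO_rpow_exp one_pos
    ((continuous_ofReal.comp continuous_etaKernel).locallyIntegrable.locallyIntegrableOn _)
    isBigO_etaKernel_atTop isBigO_etaKernel_nhdsGT_zero hs

-- differentiated geometric series in `-e^{-t}`
lemma hasSum_etaKernel {t : ℝ} (ht : 0 < t) :
    HasSum (fun n : ℕ ↦ (-1 : ℂ) ^ (n + 1) * n * rexp (-n * t)) (etaKernel t) := by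
  have hq : ‖-(rexp (-t) : ℂ)‖ < 1 := by
    rw [norm_neg, norm_real, Real.norm_of_nonneg (Real.exp_pos _).le]
    exact Real.exp_lt_one_iff.mpr (neg_lt_zero.mpr ht)
  have hsum : (etaKernel t : ℂ) = -(-(rexp (-t) : ℂ) / (1 - -(rexp (-t) : ℂ)) ^ 2) := by
    simp [etaKernel, neg_div]
  rw [hsum]
  refine (hasSum_coe_mul_geometric_of_norm_lt_one hq).neg.congr_fun fun n ↦ ?_
  rw [show -(n : ℝ) * t = n * -t by ring, Real.exp_nat_mul]
  push_cast
  ring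

lemma mellin_etaKernel_of_one_lt_re {z : ℂ} (hz : 1 < z.re) :
    mellin (ofReal ∘ etaKernel) (z + 1) = (1 - 2 ^ (1 - z)) * Gamma (z + 1) * riemannZeta z := by
  have hz0 : z ≠ 0 := by rintro rfl; norm_num at hz
  have hsum : Summable fun n : ℕ ↦ ‖(-1 : ℂ) ^ (n + 1) * n‖ / (n : ℝ) ^ (z + 1).re := by
    refine (Real.summable_nat_rpow.mpr (by linarith : -z.re < -1)).congr fun n ↦ ?_
    rcases n.eq_zero_or_pos with rfl | hn
    · simp [Real.zero_rpow (neg_ne_zero.mpr (by linarith : z.re ≠ 0))]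
    · have hn : (0 : ℝ) < n := Nat.cast_pos.mpr hn
      rw [norm_mul, norm_pow, norm_neg, norm_one, one_pow, one_mul, norm_natCast, add_re, one_re,
        Real.rpow_add_one hn.ne', Real.rpow_neg hn.le]
      field_simp
  have hmellin := hasSum_mellin (a := fun n : ℕ ↦ (-1 : ℂ) ^ (n + 1) * n) (p := fun n ↦ n)
    (fun n ↦ n.eq_zero_or_pos.imp (by rintro rfl; simp) Nat.cast_pos.mpr)
    (by rw [add_re, one_re]; linarith) (fun t ht ↦ hasSum_etaKernel ht) hsum
  rw [mul_comm _ (Gamma _), mul_assoc]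
  refine hmellin.unique (((hasSum_neg_one_pow_div_nat_cpow hz).mul_left _).congr_fun fun n ↦ ?_)
  rw [ofReal_natCast, mul_div_assoc]
  congr 1
  rcases n.eq_zero_or_pos with rfl | hn
  · simp [zero_cpow hz0]
  · have hn : (n : ℂ) ≠ 0 := Nat.cast_ne_zero.mpr hn.ne'
    rw [cpow_add _ _ hn, cpow_one]
    field_simp

lemma isPreconnected_re_pos_diff_one : IsPreconnected ({z : ℂ | 0 < z.re} \ {1}) := by
  have hC₁ := ((convex_halfSpace_re_gt 0).inter (convex_halfSpace_re_lt 1)).isPreconnected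
  have hC₂ := (convex_halfSpace_re_gt 1).isPreconnected
  have hC₃ := ((convex_halfSpace_re_gt 0).inter (convex_halfSpace_im_gt 0)).isPreconnected
  have hC₄ := ((convex_halfSpace_re_gt 0).inter (convex_halfSpace_im_lt 0)).isPreconnected
  convert ((hC₁.union (1 / 2 + I / 2) ?_ ?_ hC₃).union (2 + I) ?_ ?_ hC₂).union
    (1 / 2 - I / 2) ?_ ?_ hC₄ using 1
  · ext z
    simp only [Set.mem_sdiff, mem_ofPred_eq, mem_singleton_iff, mem_union, mem_inter_iff,
      Complex.ext_iff, one_re, one_im]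
    constructor
    · rintro ⟨h₀, h₁⟩
      by_contra! h
      exact h₁ ⟨by linarith [h.1.1.1 h₀, h.1.2], by linarith [h.1.1.2 h₀, h.2 h₀]⟩
    · rintro (((⟨h₀, h₁⟩ | ⟨h₀, h₁⟩) | h) | ⟨h₀, h₁⟩) <;>
        refine ⟨by linarith, fun h ↦ ?_⟩ <;> linarith [h.1, h.2]
  all_goals norm_num

lemma mellin_etaKernel {z : ℂ} (hz : 0 < z.re) (hz₁ : z ≠ 1) :
    mellin (ofReal ∘ etaKernel) (z + 1) = (1 - 2 ^ (1 - z)) * Gamma (z + 1) * riemannZeta z := by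
  set U : Set ℂ := {w | 0 < w.re} \ {1}
  have hU : IsOpen U := (isOpen_lt continuous_const continuous_re).sdiff isClosed_singleton
  have hre {w : ℂ} (hw : w ∈ U) : 0 < (w + 1).re := by rw [add_re, one_re]; linarith [hw.1.out]
  have hmellin : AnalyticOnNhd ℂ (fun w ↦ mellin (ofReal ∘ etaKernel) (w + 1)) U :=
    DifferentiableOn.analyticOnNhd (fun w hw ↦ ((differentiableAt_mellin_etaKernel (hre hw)).comp
      w (differentiableAt_id.add_const 1)).differentiableWithinAt) hU
  have hzeta : AnalyticOnNhd ℂ (fun w ↦ (1 - 2 ^ (1 - w)) * Gamma (w + 1) * riemannZeta w) U := by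
    refine DifferentiableOn.analyticOnNhd (fun w hw ↦ DifferentiableAt.differentiableWithinAt ?_) hU
    have hΓ : DifferentiableAt ℂ Gamma (w + 1) := differentiableAt_Gamma _ fun m hm ↦ by
      have := congrArg re hm
      simp only [neg_re, natCast_re] at this
      linarith [hre hw, m.cast_nonneg (α := ℝ)]
    exact (((differentiableAt_const 1).sub ((differentiableAt_const 1).sub differentiableAt_id
      |>.const_cpow (.inl two_ne_zero))).mul (hΓ.comp w (differentiableAt_id.add_const 1))).mul
      (differentiableAt_riemannZeta hw.2)
  have hev : (fun w ↦ mellin (ofReal ∘ etaKernel) (w + 1)) =ᶠ[𝓝 2]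
      fun w ↦ (1 - 2 ^ (1 - w)) * Gamma (w + 1) * riemannZeta w := by
    filter_upwards [(isOpen_lt continuous_const continuous_re).mem_nhds
      (show (1 : ℝ) < (2 : ℂ).re by norm_num)] with w hw
    exact mellin_etaKernel_of_one_lt_re hw
  exact hmellin.eqOn_of_preconnected_of_eventuallyEq hzeta isPreconnected_re_pos_diff_one
    (by norm_num [U]) hev ⟨hz, hz₁⟩

lemma posSemidef_mellin_etaKernel {ι : Type*} [Finite ι] {s : ι → ℂ} (hs : ∀ i, 0 < (s i).re) :
    (Matrix.of fun j k ↦ mellin (ofReal ∘ etaKernel) (s j + conj (s k) + 1)).PosSemidef := by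
  set f : ι → ℝ → ℂ := fun i t ↦ (t : ℂ) ^ s i * √(etaKernel t)
  have hre (j k : ι) : 0 < (s j + conj (s k) + 1).re := by
    simp only [add_re, conj_re, one_re]; linarith [hs j, hs k]
  have hf (j k : ι) : ∀ t ∈ Ioi (0 : ℝ),
      (t : ℂ) ^ (s j + conj (s k) + 1 - 1) • (etaKernel t : ℂ) = f j t * conj (f k t) := by
    intro t (ht : 0 < t)
    have harg : (t : ℂ).arg ≠ π := by rw [arg_ofReal_of_nonneg ht.le]; exact Real.pi_ne_zero.symm
    rw [add_sub_cancel_right, smul_eq_mul, cpow_add _ _ (ofReal_ne_zero.mpr ht.ne'),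
      cpow_conj _ _ harg, conj_ofReal, ← Real.mul_self_sqrt (etaKernel_nonneg t), ofReal_mul]
    simp only [f, map_mul, conj_ofReal]
    ring
  have hmem (i : ι) : MemLp (f i) 2 (volume.restrict (Ioi 0)) := by
    refine (memLp_two_iff_integrable_sq_norm ?_).mpr ?_
    · exact ((continuous_ofReal_cpow_const (hs i)).mul (continuous_ofReal.comp
        (continuous_etaKernel.sqrt))).aestronglyMeasurable
    · refine ((mellinConvergent_etaKernel (hre i i)).congr_fun (hf i i) measurableSet_Ioi).norm.congr
        (.of_forall fun t ↦ ?_)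
      simp only [norm_mul, RCLike.norm_conj, sq]
  have hentries : (Matrix.of fun j k ↦ mellin (ofReal ∘ etaKernel) (s j + conj (s k) + 1))
      = Matrix.of fun j k ↦ ∫ t in Ioi 0, f j t * conj (f k t) := by
    ext j k
    exact setIntegral_congr_fun measurableSet_Ioi (hf j k)
  exact hentries ▸ Matrix.posSemidef_integral_mul_conj hmem

lemma posSemidef_one_sub_two_cpow_mul_Gamma_mul_riemannZeta {ι : Type*} [Finite ι] {s : ι → ℂ}
    (hs : ∀ i, 0 < (s i).re) (hne : ∀ j k, s j + conj (s k) ≠ 1) :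
    (Matrix.of fun j k ↦ (1 - 2 ^ (1 - (s j + conj (s k)))) * Gamma (s j + conj (s k) + 1)
      * riemannZeta (s j + conj (s k))).PosSemidef := by
  have hentries : (Matrix.of fun j k ↦ (1 - 2 ^ (1 - (s j + conj (s k))))
      * Gamma (s j + conj (s k) + 1) * riemannZeta (s j + conj (s k)))
      = Matrix.of fun j k ↦ mellin (ofReal ∘ etaKernel) (s j + conj (s k) + 1) := by
    ext j k
    refine (mellin_etaKernel ?_ (hne j k)).symm
    rw [add_re, conj_re]
    exact add_pos (hs j) (hs k)
  exact hentries ▸ posSemidef_mellin_etaKernel hs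

/-- For `s_{j,ℓ} ∈ ℂ` with `Re(s_{j,ℓ}) > 0` and `s_{j,ℓ} + conj s_{k,ℓ} ≠ 1`, the matrix
with `(j,k)` entry
`∏_{ℓ=1}^m (1 - 2^{1 - s_{j,ℓ} - conj s_{k,ℓ}}) Γ(s_{j,ℓ} + conj s_{k,ℓ} + 1) ζ(s_{j,ℓ} + conj s_{k,ℓ})`
is positive semidefinite. -/
theorem eta_gamma_succ_zeta_matrix_posSemidef (m n : ℕ) (s : Fin n → Fin m → ℂ)
    (hs : ∀ j l, 0 < (s j l).re)
    (hne : ∀ j k l, s j l + (starRingEnd ℂ) (s k l) ≠ 1) :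
    ∀ c : Fin n → ℂ,
      0 ≤ ∑ j : Fin n, ∑ k : Fin n,
        (∏ l : Fin m,
            (1 - (2 : ℂ) ^ (1 - s j l - (starRingEnd ℂ) (s k l)))
              * Complex.Gamma (s j l + (starRingEnd ℂ) (s k l) + 1)
              * riemannZeta (s j l + (starRingEnd ℂ) (s k l)))
          * c j * (starRingEnd ℂ) (c k) := by
  intro c
  have hfactor (l : Fin m) := posSemidef_one_sub_two_cpow_mul_Gamma_mul_riemannZeta
    (s := fun j ↦ s j l) (fun j ↦ hs j l) (fun j k ↦ hne j k l)
  simpa only [Matrix.of_apply, sub_sub, Complex.star_def] using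
    (Matrix.posSemidef_entrywise_prod Finset.univ fun l _ ↦ hfactor l).sum_mul_mul_star_nonneg c
end
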